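/- arXiv:1209.1414 — 3 statements merged into one kernel-verified Lean document; each statement's English description precedes it below -/
import Mathlib

section
/- Let R be a discrete valuation ring with valuation v and a₂, a₄, a₆ ∈ R with v(a₂) = 1, v(a₄) ≥ (n+4)/2, v(a₆) ≥ n+3 for an integer n ≥ 1. Then v(Disc(x³ + a₂x² + a₄x + a₆) − a₂²(a₄² − 4a₂a₆)) ≥ n + 7. -/
/-! Subtracting `a₂²(a₄² − 4a₂a₆)` cancels the two terms of the discriminant of lowest valuation,
leaving `−4a₄³ − 27a₆² + 18a₂a₄a₆`. Each remaining monomial has valuation at least `n + 7`: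
`3⌈(n+4)/2⌉ ≥ n + 7` and `2(n+3) ≥ n + 7` for `n ≥ 1`, and `1 + 3 + (n+3) = n + 7`. -/

section PowDvd

variable {M : Type*} [CommMonoid M] {p a b : M} {m n : ℕ}

theorem pow_mul_dvd_pow_of_pow_dvd (h : p ^ m ∣ a) (k : ℕ) : p ^ (m * k) ∣ a ^ k := by
  rw [pow_mul]
  exact pow_dvd_pow_of_dvd h k

theorem pow_add_dvd_mul_of_pow_dvd (ha : p ^ m ∣ a) (hb : p ^ n ∣ b) : p ^ (m + n) ∣ a * b := by
  rw [pow_add]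
  exact mul_dvd_mul ha hb

end PowDvd

theorem cubic_disc_sub_eq {R : Type*} [CommRing R] (a₂ a₄ a₆ : R) :
    (-4 * a₂ ^ 3 * a₆ + a₂ ^ 2 * a₄ ^ 2 - 4 * a₄ ^ 3 - 27 * a₆ ^ 2 + 18 * a₂ * a₄ * a₆)
        - a₂ ^ 2 * (a₄ ^ 2 - 4 * a₂ * a₆)
      = -4 * a₄ ^ 3 - 27 * a₆ ^ 2 + 18 * (a₂ * a₄ * a₆) := by
  ring

theorem val_disc_sub_ge_general {R : Type*} [CommRing R]
    (π : R) (n : ℕ) (hn : 1 ≤ n) (a₂ a₄ a₆ : R)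
    (h2 : π ∣ a₂)
    (h4 : π ^ ((n + 5) / 2) ∣ a₄) (h6 : π ^ (n + 3) ∣ a₆) :
    π ^ (n + 7) ∣
      (-4 * a₂ ^ 3 * a₆ + a₂ ^ 2 * a₄ ^ 2 - 4 * a₄ ^ 3 - 27 * a₆ ^ 2 + 18 * a₂ * a₄ * a₆)
        - a₂ ^ 2 * (a₄ ^ 2 - 4 * a₂ * a₆) := by
  rw [cubic_disc_sub_eq]
  have h4_cube : π ^ (n + 7) ∣ a₄ ^ 3 :=
    (pow_dvd_pow π (by omega)).trans (pow_mul_dvd_pow_of_pow_dvd h4 3)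
  have h6_sq : π ^ (n + 7) ∣ a₆ ^ 2 :=
    (pow_dvd_pow π (by omega)).trans (pow_mul_dvd_pow_of_pow_dvd h6 2)
  have h2_46 : π ^ (n + 7) ∣ a₂ * a₄ * a₆ := by
    have h2_pow : π ^ 1 ∣ a₂ := (pow_one π).symm ▸ h2
    have h4_pow : π ^ 3 ∣ a₄ := (pow_dvd_pow π (by omega)).trans h4
    have h246 := pow_add_dvd_mul_of_pow_dvd (pow_add_dvd_mul_of_pow_dvd h2_pow h4_pow) h6
    rwa [show 1 + 3 + (n + 3) = n + 7 by omega] at h246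
  exact dvd_add (dvd_sub (h4_cube.mul_left _) (h6_sq.mul_left _)) (h2_46.mul_left _)

/-- Let `R` be a DVR with uniformizer `π` and `a₂, a₄, a₆ ∈ R` with `v(a₂) = 1`,
`v(a₄) ≥ ⌈(n+4)/2⌉`, `v(a₆) ≥ n+3` for an integer `n ≥ 1`.  Then
`v(Disc(x³ + a₂x² + a₄x + a₆) − a₂²(a₄² − 4a₂a₆)) ≥ n + 7`.
Valuation conditions are expressed via divisibility by powers of `π`. -/
theorem val_disc_sub_ge {R : Type*} [CommRing R] [IsDomain R] [IsDiscreteValuationRing R]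
    (π : R) (hπ : Irreducible π) (n : ℕ) (hn : 1 ≤ n) (a₂ a₄ a₆ : R)
    (h2 : π ∣ a₂) (h2' : ¬ π ^ 2 ∣ a₂)
    (h4 : π ^ ((n + 5) / 2) ∣ a₄) (h6 : π ^ (n + 3) ∣ a₆) :
    π ^ (n + 7) ∣
      (-4 * a₂ ^ 3 * a₆ + a₂ ^ 2 * a₄ ^ 2 - 4 * a₄ ^ 3 - 27 * a₆ ^ 2 + 18 * a₂ * a₄ * a₆)
        - a₂ ^ 2 * (a₄ ^ 2 - 4 * a₂ * a₆) :=
  val_disc_sub_ge_general π n hn a₂ a₄ a₆ h2 h4 h6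
end

section
/- Let R ⊆ R' be an extension of discrete valuation rings with ramification index e (so v' restricted to R equals e·v). For a Weierstrass equation over Frac(R) with coefficients a₁,…,a₆ ∈ R, if min_i v(a_i)/i = m/12 for some m ∈ {0,2,3,4,6,8,9,10}, then min_i v'(a_i)/i = em/12, and after performing ⌊em/12⌋ rescalings x ↦ π'²x, y ↦ π'³y over R', the minimum of v'(A_i)/i over the new coefficients lies in {0, 1/6, 1/4, 1/3, 1/2, 2/3, 3/4, 5/6}. -/
/-!
Multiplying all valuations by `e ≥ 0` multiplies `min_i nᵢ/i` by `e`, and one rescaling lowers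
every `nᵢ/i` by exactly `1`. Hence after `⌊em/12⌋` rescalings the minimum is the fractional
part of `em/12`. Every admissible `m` is divisible by `2` or `3`, hence so is `em`, and the
fractional part of `em/12` is then a multiple of `1/6` or of `1/4` in `[0, 1)`.
-/

lemma Int.fract_intCast_div_twelve_mem {N : ℤ} (hN : 2 ∣ N ∨ 3 ∣ N) :
    Int.fract ((N : ℚ) / 12) ∈ ({0, 1/6, 1/4, 1/3, 1/2, 2/3, 3/4, 5/6} : Set ℚ) := by
  have h12 : ((12 : ℕ) : ℚ) = 12 := by norm_num
  rw [← h12, Int.fract_div_intCast_eq_div_intCast_mod]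
  have hr : 2 ∣ N % 12 ∨ 3 ∣ N % 12 := by omega
  have hr0 : 0 ≤ N % 12 := by omega
  have hr12 : N % 12 < 12 := by omega
  generalize N % 12 = r at hr hr0 hr12
  simp only [Set.mem_insert_iff, Set.mem_singleton_iff]
  interval_cases r <;> first | omega | norm_num

lemma intCast_div_twelve_sub_ediv_eq_fract (N : ℤ) :
    (N : ℚ) / 12 - ((N / 12 : ℤ) : ℚ) = Int.fract ((N : ℚ) / 12) := by
  have hfloor := Rat.floor_intCast_div_natCast N 12
  push_cast at hfloor
  rw [Int.fract, hfloor]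

/-- Arithmetic of valuations in a tame extension of ramification index `e` (so that the
valuation `v'` of the extension restricts to `e·v`).  If the valuations `nᵢ = v(aᵢ)`
(`i ∈ {1,2,3,4,6}`) of the Weierstrass coefficients satisfy `min_i nᵢ/i = m/12` with
`m ∈ {0,2,3,4,6,8,9,10}`, then `min_i (e·nᵢ)/i = e·m/12`, and after `⌊em/12⌋` rescalings
(each rescaling subtracting `i` from the valuation of `aᵢ`) the minimum of the new
valuations divided by `i` lies in `{0, 1/6, 1/4, 1/3, 1/2, 2/3, 3/4, 5/6}`. -/
theorem tame_rescaling_min (e : ℤ) (he : 1 ≤ e) (m : ℤ)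
    (hm : m ∈ ({0, 2, 3, 4, 6, 8, 9, 10} : Set ℤ))
    (n₁ n₂ n₃ n₄ n₆ : ℤ)
    (hmin : min (min (min (min ((n₁ : ℚ) / 1) ((n₂ : ℚ) / 2)) ((n₃ : ℚ) / 3))
      ((n₄ : ℚ) / 4)) ((n₆ : ℚ) / 6) = (m : ℚ) / 12) :
    min (min (min (min ((e * n₁ : ℚ) / 1) ((e * n₂ : ℚ) / 2)) ((e * n₃ : ℚ) / 3))
        ((e * n₄ : ℚ) / 4)) ((e * n₆ : ℚ) / 6) = (e * m : ℚ) / 12 ∧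
      min (min (min (min (((e * n₁ - 1 * (e * m / 12) : ℤ) : ℚ) / 1)
              (((e * n₂ - 2 * (e * m / 12) : ℤ) : ℚ) / 2))
            (((e * n₃ - 3 * (e * m / 12) : ℤ) : ℚ) / 3))
          (((e * n₄ - 4 * (e * m / 12) : ℤ) : ℚ) / 4))
        (((e * n₆ - 6 * (e * m / 12) : ℤ) : ℚ) / 6)
        ∈ ({0, 1/6, 1/4, 1/3, 1/2, 2/3, 3/4, 5/6} : Set ℚ) := by
  have he0 : (0 : ℚ) ≤ e := by exact_mod_cast (zero_le_one.trans he)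
  have hscaled : min (min (min (min ((e * n₁ : ℚ) / 1) ((e * n₂ : ℚ) / 2)) ((e * n₃ : ℚ) / 3))
      ((e * n₄ : ℚ) / 4)) ((e * n₆ : ℚ) / 6) = (e * m : ℚ) / 12 := by
    simp only [mul_div_assoc, ← mul_min_of_nonneg _ _ he0, hmin]
  have hdvd : 2 ∣ e * m ∨ 3 ∣ e * m := by
    simp only [Set.mem_insert_iff, Set.mem_singleton_iff] at hm
    rcases hm with rfl | rfl | rfl | rfl | rfl | rfl | rfl | rfl <;> omega
  refine ⟨hscaled, ?_⟩
  simp only [Int.cast_sub, Int.cast_mul, sub_div, Int.cast_one, Int.cast_ofNat, ne_eq,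
    one_ne_zero, OfNat.ofNat_ne_zero, not_false_eq_true, mul_div_cancel_left₀, min_sub_sub_right]
  rw [hscaled, ← Int.cast_mul, intCast_div_twelve_sub_ediv_eq_fract]
  exact Int.fract_intCast_div_twelve_mem hdvd
end

section
/- Let e be odd and n ≥ 1. If the integers (v(a_i)) satisfy v(a₂) = 1 and v(a_i) ≥ i/2 + ⌊(i−1)/2⌋·n/2 for i ∈ {1,3,4,6}, then after multiplying all valuations by e and subtracting i·(e−1)/2 (one rescaling step repeated (e−1)/2 times), the new valuations V(a_i) = e·v(a_i) − i(e−1)/2 satisfy V(a₂) = 1 and V(a_i) ≥ i/2 + ⌊(i−1)/2⌋·(en)/2. -/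
theorem rescaled_valuation_ge {K : Type*} [Field K] [LinearOrder K] [IsStrictOrderedRing K]
    {e v i k n : K} (he : 0 ≤ e) (hv : v ≥ i / 2 + k * n / 2) :
    e * v - i * (e - 1) / 2 ≥ i / 2 + k * (e * n) / 2 := by
  have hscaled : e * v ≥ e * (i / 2 + k * n / 2) := mul_le_mul_of_nonneg_left hv he
  linarith

theorem Instar_tame_odd_general (e n : ℤ) (he1 : 1 ≤ e)
    (v₁ v₂ v₃ v₄ v₆ : ℚ)
    (h2 : v₂ = 1)
    (h1 : v₁ ≥ 1 / 2 + 0 * (n : ℚ) / 2)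
    (h3 : v₃ ≥ 3 / 2 + 1 * (n : ℚ) / 2)
    (h4 : v₄ ≥ 4 / 2 + 1 * (n : ℚ) / 2)
    (h6 : v₆ ≥ 6 / 2 + 2 * (n : ℚ) / 2) :
    (e : ℚ) * v₂ - 2 * ((e : ℚ) - 1) / 2 = 1 ∧
    (e : ℚ) * v₁ - 1 * ((e : ℚ) - 1) / 2 ≥ 1 / 2 + 0 * ((e * n : ℤ) : ℚ) / 2 ∧
    (e : ℚ) * v₃ - 3 * ((e : ℚ) - 1) / 2 ≥ 3 / 2 + 1 * ((e * n : ℤ) : ℚ) / 2 ∧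
    (e : ℚ) * v₄ - 4 * ((e : ℚ) - 1) / 2 ≥ 4 / 2 + 1 * ((e * n : ℤ) : ℚ) / 2 ∧
    (e : ℚ) * v₆ - 6 * ((e : ℚ) - 1) / 2 ≥ 6 / 2 + 2 * ((e * n : ℤ) : ℚ) / 2 := by
  have he : (0 : ℚ) ≤ e := by exact_mod_cast (zero_le_one.trans he1)
  push_cast
  exact ⟨by rw [h2]; ring, rescaled_valuation_ge he h1, rescaled_valuation_ge he h3,
    rescaled_valuation_ge he h4, rescaled_valuation_ge he h6⟩

/-- The arithmetic core of the proof that type `I*_n` becomes `I*_{en}` under a tame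
extension of odd degree `e`: if the valuations `v(aᵢ)` satisfy `v(a₂) = 1` and
`v(aᵢ) ≥ i/2 + ⌊(i−1)/2⌋·n/2` for `i ∈ {1,3,4,6}`, then the rescaled valuations
`V(aᵢ) = e·v(aᵢ) − i·(e−1)/2` satisfy `V(a₂) = 1` and
`V(aᵢ) ≥ i/2 + ⌊(i−1)/2⌋·(en)/2`. -/
theorem Instar_tame_odd (e n : ℤ) (he : Odd e) (he1 : 1 ≤ e) (hn : 1 ≤ n)
    (v₁ v₂ v₃ v₄ v₆ : ℚ)
    (h2 : v₂ = 1)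
    (h1 : v₁ ≥ 1 / 2 + 0 * (n : ℚ) / 2)
    (h3 : v₃ ≥ 3 / 2 + 1 * (n : ℚ) / 2)
    (h4 : v₄ ≥ 4 / 2 + 1 * (n : ℚ) / 2)
    (h6 : v₆ ≥ 6 / 2 + 2 * (n : ℚ) / 2) :
    (e : ℚ) * v₂ - 2 * ((e : ℚ) - 1) / 2 = 1 ∧
    (e : ℚ) * v₁ - 1 * ((e : ℚ) - 1) / 2 ≥ 1 / 2 + 0 * ((e * n : ℤ) : ℚ) / 2 ∧
    (e : ℚ) * v₃ - 3 * ((e : ℚ) - 1) / 2 ≥ 3 / 2 + 1 * ((e * n : ℤ) : ℚ) / 2 ∧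
    (e : ℚ) * v₄ - 4 * ((e : ℚ) - 1) / 2 ≥ 4 / 2 + 1 * ((e * n : ℤ) : ℚ) / 2 ∧
    (e : ℚ) * v₆ - 6 * ((e : ℚ) - 1) / 2 ≥ 6 / 2 + 2 * ((e * n : ℤ) : ℚ) / 2 :=
  Instar_tame_odd_general e n he1 v₁ v₂ v₃ v₄ v₆ h2 h1 h3 h4 h6
end
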